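/- The product of two monomial multi-quasisymmetric functions satisfies the recursion M_{(w_1,...,w_{n_1})} · M_{(u_1,...,u_{n_2})} = M_{(w_1, (w_2,...,w_{n_1}) * u)} + M_{(u_1, w * (u_2,...,u_{n_2}))} + M_{(w_1·u_1, (w_2,...,w_{n_1}) * (u_2,...,u_{n_2}))}, where w = (w_1,...,w_{n_1}), u = (u_1,...,u_{n_2}), * is the quasi-shuffle product on sequences, and M is extended linearly. -/

import Mathlib

open scoped Classical

/-- The quasi-shuffle product of two words over an alphabet `C` with a binary
operation `op`, with values in the free `k`-module on words. -/
noncomputable def qsh {k : Type*} [CommRing k] {C : Type*} (op : C → C → C) :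
    List C → List C → (List C →₀ k)
  | [], y => Finsupp.single y 1
  | x, [] => Finsupp.single x 1
  | a :: x, b :: y =>
      (qsh op x (b :: y)).mapDomain (a :: ·) + (qsh op (a :: x) y).mapDomain (b :: ·) +
        (qsh op x y).mapDomain (op a b :: ·)
  termination_by x y => x.length + y.length
  decreasing_by all_goals simp [List.length_cons] <;> omega

/-- The exponent of `x_j^w` for a formal monomial `w ∈ [m]^E`. -/
noncomputable def colExpE {E : Type*} [AddCommMonoid E] (m : ℕ)
    (w : Fin m → E) (j : ℕ+) : (Fin m × ℕ+) →₀ E :=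
  ∑ i : Fin m, Finsupp.single (i, j) (w i)

/-- The exponent of the monomial `x_{j_1}^{w_1} ⋯ x_{j_k}^{w_k}`. -/
noncomputable def seqExpE {E : Type*} [AddCommMonoid E] (m : ℕ)
    (w : List (Fin m → E)) (j : List ℕ+) : (Fin m × ℕ+) →₀ E :=
  (List.zipWith (colExpE m) w j).sum

/-- The monomial multi-quasisymmetric function with semigroup exponents. -/
noncomputable def MwE (k : Type*) [CommRing k] {E : Type*} [AddCommMonoid E]
    (m : ℕ) (w : List (Fin m → E)) : ((Fin m × ℕ+) →₀ E) → k :=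
  fun d => if ∃ j : List ℕ+, j.length = w.length ∧ j.Chain' (· < ·) ∧
      seqExpE m w j = d then 1 else 0

/-- The multiplication of the formal power series algebra `k[[X]]^E`. -/
noncomputable def mulE {k : Type*} [CommRing k] {E : Type*} [AddCommMonoid E]
    (m : ℕ) (f g : ((Fin m × ℕ+) →₀ E) → k) : ((Fin m × ℕ+) →₀ E) → k :=
  fun d => ∑ᶠ p ∈ {p : ((Fin m × ℕ+) →₀ E) × ((Fin m × ℕ+) →₀ E) |
    p.1 + p.2 = d}, f p.1 * g p.2

/-!
Write `M_v^{>n}` (`MwEAbove`) for the sum over index sequences `n < j_1 < ⋯ < j_k`. If `c ≠ 0`,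
the factorization `x_j^c · e` of a monomial with `e` a monomial of `M_v^{>j}` is unique, whence
`M_{c :: v}^{>n} = ∑_{j > n} x_j^c M_v^{>j}`. Multiplying two such expansions and splitting the
double sum over the first columns `j, l` into `j < l`, `l < j` and `j = l` yields, by induction
on the total length and for all bounds `n` at once, the quasi-shuffle product formula
`M_w^{>n} M_u^{>n} = ∑_z (w * u)_z M_z^{>n}`; the theorem is its case `n = 0`, unfolded once.
-/

open Finset

section Exponents

variable {E : Type*} [AddCommMonoid E] {m : ℕ}

lemma colExpE_apply (c : Fin m → E) (j : ℕ+) (i : Fin m) (l : ℕ+) :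
    colExpE m c j (i, l) = if l = j then c i else 0 := by
  simp [colExpE, Finsupp.single_apply, Prod.ext_iff, eq_comm, ite_and]

lemma colExpE_add (a b : Fin m → E) (j : ℕ+) :
    colExpE m (a + b) j = colExpE m a j + colExpE m b j := by
  ext ⟨i, l⟩
  simp only [colExpE_apply, Finsupp.add_apply, Pi.add_apply]
  split_ifs <;> simp

@[simp]
lemma seqExpE_nil (w : List (Fin m → E)) : seqExpE m w [] = 0 := by
  simp [seqExpE]

lemma seqExpE_cons (c : Fin m → E) (v : List (Fin m → E)) (j : ℕ+) (r : List ℕ+) :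
    seqExpE m (c :: v) (j :: r) = colExpE m c j + seqExpE m v r := by
  simp [seqExpE]

lemma seqExpE_apply_of_le {n : ℕ} (w : List (Fin m → E)) {j : List ℕ+}
    (hj : ∀ l ∈ j, n < (l : ℕ)) (i : Fin m) {l : ℕ+} (hl : (l : ℕ) ≤ n) :
    seqExpE m w j (i, l) = 0 := by
  induction j generalizing w with
  | nil => simp
  | cons j₁ r ih =>
    cases w with
    | nil => simp [seqExpE]
    | cons c v =>
      have hne : l ≠ j₁ := by rintro rfl; exact absurd (hj l (by simp)) (not_lt.2 hl)
      rw [seqExpE_cons, Finsupp.add_apply, colExpE_apply, if_neg hne,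
        ih v fun e he => hj e (by simp [he]), add_zero]

end Exponents

section Antidiagonals

variable {E : Type*} [AddCommMonoid E]

lemma eq_zero_and_eq_zero_of_add_eq_zero (hsub : ∀ a b : E, a ≠ 0 → b ≠ 0 → a + b ≠ 0)
    {a b : E} (h : a + b = 0) : a = 0 ∧ b = 0 := by
  by_cases ha : a = 0
  · exact ⟨ha, by simpa [ha] using h⟩
  by_cases hb : b = 0
  · exact absurd (by simpa [hb] using h) ha
  exact absurd h (hsub a b ha hb)

lemma Finsupp.finite_setOf_add_eq {ι : Type*}
    (hfin : ∀ e : E, {p : E × E | p.1 + p.2 = e}.Finite)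
    (hsub : ∀ a b : E, a ≠ 0 → b ≠ 0 → a + b ≠ 0) (d : ι →₀ E) :
    {p : (ι →₀ E) × (ι →₀ E) | p.1 + p.2 = d}.Finite := by
  have hzero : ∀ p : (ι →₀ E) × (ι →₀ E), p.1 + p.2 = d → ∀ x ∉ d.support,
      p.1 x = 0 ∧ p.2 x = 0 := fun p hp x hx =>
    eq_zero_and_eq_zero_of_add_eq_zero hsub (by
      rw [← Finsupp.add_apply, hp, Finsupp.notMem_support_iff.1 hx])
  refine Set.Finite.of_finite_image (f := fun p (x : d.support) => (p.1 x, p.2 x))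
    ((Set.Finite.pi fun x : d.support => hfin (d x)).subset ?_) ?_
  · rintro _ ⟨p, hp : p.1 + p.2 = d, rfl⟩ x -
    simp [← hp]
  · intro p hp p' hp' h
    have hx : ∀ x, p.1 x = p'.1 x ∧ p.2 x = p'.2 x := fun x => by
      by_cases hx : x ∈ d.support
      · simpa [Prod.ext_iff] using congrFun h ⟨x, hx⟩
      · simp [hzero p hp x hx, hzero p' hp' x hx]
    exact Prod.ext (Finsupp.ext fun x => (hx x).1) (Finsupp.ext fun x => (hx x).2)

lemma sum_antidiagonal_swap {A M : Type*} [AddCommMonoid A] [HasAntidiagonal A]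
    [AddCommMonoid M] (d : A) (g : A × A → M) :
    ∑ p ∈ antidiagonal d, g p.swap = ∑ p ∈ antidiagonal d, g p := by
  conv_rhs => rw [← HasAntidiagonal.map_prodComm_antidiagonal, sum_map]
  rfl

noncomputable abbrev hasAntidiagonalOfFinite {A : Type*} [AddMonoid A]
    (h : ∀ a : A, {p : A × A | p.1 + p.2 = a}.Finite) : HasAntidiagonal A where
  antidiagonal a := (h a).toFinset
  mem_antidiagonal := by simp

end Antidiagonals

section Monomials

variable {k : Type*} [CommRing k] {E : Type*} [AddCommMonoid E] {m : ℕ}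

/-- Exponents of the monomials `x_{j_1}^{w_1} ⋯ x_{j_k}^{w_k}` with `n < j_1 < ⋯ < j_k`. -/
def monomialsAbove (m n : ℕ) (w : List (Fin m → E)) : Set ((Fin m × ℕ+) →₀ E) :=
  {d | ∃ j : List ℕ+, j.length = w.length ∧ (n :: j.map PNat.val).IsChain (· < ·) ∧
    seqExpE m w j = d}

variable (k) in
noncomputable def MwEAbove (m n : ℕ) (w : List (Fin m → E)) :
    ((Fin m × ℕ+) →₀ E) → k :=
  (monomialsAbove m n w).indicator 1

lemma MwE_eq_MwEAbove_zero (w : List (Fin m → E)) : MwE k m w = MwEAbove k m 0 w := by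
  ext d
  have hchain (j : List ℕ+) : j.IsChain (· < ·) ↔ (0 :: j.map PNat.val).IsChain (· < ·) := by
    cases j with
    | nil => simp
    | cons j r =>
      rw [List.map_cons, List.isChain_cons_cons, ← List.map_cons, List.isChain_map]
      simp
  simp only [MwE, MwEAbove, monomialsAbove, Set.indicator_apply, Pi.one_apply]
  exact if_congr (exists_congr fun j => and_congr_right' (and_congr_left' (hchain j))) rfl rfl

lemma mem_monomialsAbove_nil {n : ℕ} {d : (Fin m × ℕ+) →₀ E} :
    d ∈ monomialsAbove m n ([] : List (Fin m → E)) ↔ d = 0 := by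
  simp [monomialsAbove, eq_comm]

lemma MwEAbove_nil (n : ℕ) (d : (Fin m × ℕ+) →₀ E) :
    MwEAbove k m n [] d = if d = 0 then 1 else 0 := by
  simp [MwEAbove, Set.indicator_apply, mem_monomialsAbove_nil]

lemma mem_monomialsAbove_cons {n : ℕ} {c : Fin m → E} {v : List (Fin m → E)}
    {d : (Fin m × ℕ+) →₀ E} :
    d ∈ monomialsAbove m n (c :: v) ↔
      ∃ j : ℕ+, n < (j : ℕ) ∧ ∃ e ∈ monomialsAbove m j v, colExpE m c j + e = d := by
  constructor
  · rintro ⟨_ | ⟨j, r⟩, hlen, hchain, rfl⟩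
    · simp at hlen
    · rw [List.map_cons, List.isChain_cons_cons] at hchain
      exact ⟨j, hchain.1, _, ⟨r, by simpa using hlen, hchain.2, rfl⟩, (seqExpE_cons ..).symm⟩
  · rintro ⟨j, hj, _, ⟨r, hlen, hchain, rfl⟩, rfl⟩
    exact ⟨j :: r, by simpa using hlen, by simpa using ⟨hj, hchain⟩, seqExpE_cons ..⟩

lemma apply_eq_zero_of_mem_monomialsAbove {n : ℕ} {v : List (Fin m → E)}
    {e : (Fin m × ℕ+) →₀ E} (he : e ∈ monomialsAbove m n v) (i : Fin m) {l : ℕ+}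
    (hl : (l : ℕ) ≤ n) : e (i, l) = 0 := by
  obtain ⟨j, -, hchain, rfl⟩ := he
  rw [List.isChain_iff_pairwise, List.pairwise_cons] at hchain
  exact seqExpE_apply_of_le v (fun l hl => hchain.1 l (List.mem_map_of_mem hl)) i hl

lemma eq_of_colExpE_add_eq {c : Fin m → E} (hc : c ≠ 0) {v : List (Fin m → E)} {j j' : ℕ+}
    {e e' : (Fin m × ℕ+) →₀ E} (he : e ∈ monomialsAbove m j v)
    (he' : e' ∈ monomialsAbove m j' v) (h : colExpE m c j + e = colExpE m c j' + e') :
    j = j' ∧ e = e' := by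
  obtain ⟨i, hi⟩ := Function.ne_iff.mp hc
  have hle : ∀ {j j' : ℕ+} {e e' : (Fin m × ℕ+) →₀ E}, e ∈ monomialsAbove m j v →
      e' ∈ monomialsAbove m j' v → colExpE m c j + e = colExpE m c j' + e' → j' ≤ j := by
    intro j j' e e' he he' h
    by_contra! hlt
    -- at `(i, j)` the left side is `c i ≠ 0` and the right side vanishes
    have := DFunLike.congr_fun h (i, j)
    simp [colExpE_apply, hlt.ne, apply_eq_zero_of_mem_monomialsAbove he i le_rfl,
      apply_eq_zero_of_mem_monomialsAbove he' i hlt.le] at this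
    exact hi this
  obtain rfl := le_antisymm (hle he' he h.symm) (hle he he' h)
  refine ⟨rfl, Finsupp.ext fun ⟨i', l⟩ => ?_⟩
  by_cases hl : l ≤ j
  · rw [apply_eq_zero_of_mem_monomialsAbove he i' hl,
      apply_eq_zero_of_mem_monomialsAbove he' i' hl]
  · simpa [colExpE_apply, (ne_of_not_le hl)] using DFunLike.congr_fun h (i', l)

end Monomials

section HeadSplits

variable {k : Type*} [CommRing k] {E : Type*} [AddCommMonoid E] {m : ℕ}
  [HasAntidiagonal ((Fin m × ℕ+) →₀ E)]

lemma mulE_apply (f g : ((Fin m × ℕ+) →₀ E) → k) (d : (Fin m × ℕ+) →₀ E) :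
    mulE m f g d = ∑ p ∈ antidiagonal d, f p.1 * g p.2 := by
  rw [mulE, ← finsum_mem_coe_finset]
  simp [HasAntidiagonal.mem_antidiagonal]

/-- When `c ≠ 0`, these are the factorizations `d = x_j^c · e` with `n < j` (`mem_headSplits`). -/
noncomputable def headSplits (n : ℕ) (c : Fin m → E) (d : (Fin m × ℕ+) →₀ E) :
    Finset (ℕ+ × ((Fin m × ℕ+) →₀ E)) :=
  ((antidiagonal d).biUnion fun p => (p.1.support.image Prod.snd).image (·, p.2)).filter
    fun q => n < (q.1 : ℕ) ∧ colExpE m c q.1 + q.2 = d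

lemma mem_headSplits {c : Fin m → E} (hc : c ≠ 0) {n : ℕ} {d : (Fin m × ℕ+) →₀ E}
    {q : ℕ+ × ((Fin m × ℕ+) →₀ E)} :
    q ∈ headSplits n c d ↔ n < (q.1 : ℕ) ∧ colExpE m c q.1 + q.2 = d := by
  refine ⟨fun hq => (mem_filter.1 hq).2, fun hq => mem_filter.2 ⟨?_, hq⟩⟩
  obtain ⟨i, hi⟩ := Function.ne_iff.mp hc
  simp only [mem_biUnion, mem_image, HasAntidiagonal.mem_antidiagonal, Finsupp.mem_support_iff]
  exact ⟨(colExpE m c q.1, q.2), hq.2, q.1,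
    ⟨(i, q.1), by simpa [colExpE_apply] using hi, rfl⟩, rfl⟩

lemma filter_headSplits_lt {c : Fin m → E} (hc : c ≠ 0) {n : ℕ} {j : ℕ+} (hj : n < (j : ℕ))
    (d : (Fin m × ℕ+) →₀ E) :
    (headSplits n c d).filter (fun q => j < q.1) = headSplits j c d := by
  ext q
  simp only [mem_filter, mem_headSplits hc, ← PNat.coe_lt_coe]
  exact ⟨fun h => ⟨h.2, h.1.2⟩, fun h => ⟨⟨hj.trans h.1, h.2⟩, h.1⟩⟩

lemma MwEAbove_cons {c : Fin m → E} (hc : c ≠ 0) (n : ℕ) (v : List (Fin m → E))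
    (d : (Fin m × ℕ+) →₀ E) :
    MwEAbove k m n (c :: v) d = ∑ q ∈ headSplits n c d, MwEAbove k m q.1 v q.2 := by
  by_cases hd : d ∈ monomialsAbove m n (c :: v)
  · obtain ⟨j, hj, e, he, rfl⟩ := mem_monomialsAbove_cons.1 hd
    rw [MwEAbove, Set.indicator_of_mem hd, sum_eq_single (j, e)]
    · simp [MwEAbove, Set.indicator_of_mem he]
    · rintro ⟨j', e'⟩ hq hne
      refine Set.indicator_of_notMem (fun he' => hne ?_) _
      obtain ⟨rfl, rfl⟩ := eq_of_colExpE_add_eq hc he' he ((mem_headSplits hc).1 hq).2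
      rfl
    · exact fun h => absurd ((mem_headSplits hc (q := (j, e))).2 ⟨hj, rfl⟩) h
  · rw [MwEAbove, Set.indicator_of_notMem hd]
    refine (sum_eq_zero fun q hq => Set.indicator_of_notMem (fun he => hd ?_) _).symm
    obtain ⟨hqn, rfl⟩ := (mem_headSplits hc).1 hq
    exact mem_monomialsAbove_cons.2 ⟨q.1, hqn, q.2, he, rfl⟩

lemma mulE_MwEAbove_nil_left (n : ℕ) (f : ((Fin m × ℕ+) →₀ E) → k) :
    mulE m (MwEAbove k m n []) f = f := by
  ext d
  rw [mulE_apply, sum_eq_single (0, d)] <;>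
    simp [MwEAbove_nil, HasAntidiagonal.mem_antidiagonal]
  rintro a b h hne rfl
  exact absurd (zero_add b ▸ h) (hne rfl)

lemma mulE_comm (f g : ((Fin m × ℕ+) →₀ E) → k) : mulE m f g = mulE m g f := by
  ext d
  rw [mulE_apply, mulE_apply, ← sum_antidiagonal_swap]
  simp [mul_comm]

lemma mulE_MwEAbove_nil_right (n : ℕ) (f : ((Fin m × ℕ+) →₀ E) → k) :
    mulE m f (MwEAbove k m n []) = f := by
  rw [mulE_comm, mulE_MwEAbove_nil_left]

variable {M : Type*} [AddCommMonoid M]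

/-- Both sides sum over the factorizations `d = x_j^c · e₁ · e₂` with `n < j`. -/
lemma sum_antidiagonal_sum_headSplits {c : Fin m → E} (hc : c ≠ 0) (n : ℕ)
    (d : (Fin m × ℕ+) →₀ E) (φ : ℕ+ → ((Fin m × ℕ+) →₀ E) → ((Fin m × ℕ+) →₀ E) → M) :
    ∑ p ∈ antidiagonal d, ∑ q ∈ headSplits n c p.1, φ q.1 q.2 p.2 =
      ∑ q ∈ headSplits n c d, ∑ p ∈ antidiagonal q.2, φ q.1 p.1 p.2 := by
  simp only [sum_sigma']
  apply sum_nbij' (fun ⟨⟨_, e₂⟩, ⟨j, e₁⟩⟩ ↦ ⟨(j, e₁ + e₂), (e₁, e₂)⟩)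
    (fun ⟨⟨j, _⟩, ⟨e₁, e₂⟩⟩ ↦ ⟨(colExpE m c j + e₁, e₂), (j, e₁)⟩) <;>
    aesop (add simp [(mem_headSplits hc), HasAntidiagonal.mem_antidiagonal, add_assoc])

lemma sum_antidiagonal_sum_headSplits_snd {c : Fin m → E} (hc : c ≠ 0) (n : ℕ)
    (d : (Fin m × ℕ+) →₀ E) (φ : ℕ+ → ((Fin m × ℕ+) →₀ E) → ((Fin m × ℕ+) →₀ E) → M) :
    ∑ p ∈ antidiagonal d, ∑ r ∈ headSplits n c p.2, φ r.1 p.1 r.2 =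
      ∑ r ∈ headSplits n c d, ∑ p ∈ antidiagonal r.2, φ r.1 p.1 p.2 := by
  rw [← sum_antidiagonal_swap d]
  simp only [Prod.fst_swap, Prod.snd_swap]
  rw [sum_antidiagonal_sum_headSplits hc n d (fun j e₁ e₂ => φ j e₂ e₁)]
  exact sum_congr rfl fun r _ => sum_antidiagonal_swap r.2 fun p => φ r.1 p.1 p.2

end HeadSplits

section HeadPairs

variable {k : Type*} [CommRing k] {E : Type*} [AddCommMonoid E] {m : ℕ}
  [HasAntidiagonal ((Fin m × ℕ+) →₀ E)]

/-- The part of `(∑ x_j^a X_j) · (∑ x_l^b Y_l)` (over `n < j`, `n < l`) where `P j l` holds. -/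
noncomputable def headPairSum (P : ℕ+ → ℕ+ → Prop) [DecidableRel P] (n : ℕ) (a b : Fin m → E)
    (X Y : ℕ+ → ((Fin m × ℕ+) →₀ E) → k) (d : (Fin m × ℕ+) →₀ E) : k :=
  ∑ p ∈ antidiagonal d, ∑ q ∈ headSplits n a p.1, ∑ r ∈ headSplits n b p.2,
    if P q.1 r.1 then X q.1 q.2 * Y r.1 r.2 else 0

variable {a b : Fin m → E} {n : ℕ} {X Y : ℕ+ → ((Fin m × ℕ+) →₀ E) → k} {d : (Fin m × ℕ+) →₀ E}

lemma headPairSum_lt (ha : a ≠ 0) (hb : b ≠ 0) :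
    headPairSum (· < ·) n a b X Y d =
      ∑ q ∈ headSplits n a d, ∑ p ∈ antidiagonal q.2,
        X q.1 p.1 * ∑ r ∈ headSplits q.1 b p.2, Y r.1 r.2 := by
  rw [headPairSum, ← sum_antidiagonal_sum_headSplits ha n d
    fun j e₁ e₂ => X j e₁ * ∑ r ∈ headSplits j b e₂, Y r.1 r.2]
  refine sum_congr rfl fun p _ => sum_congr rfl fun q hq => ?_
  rw [← filter_headSplits_lt hb ((mem_headSplits ha).1 hq).1, sum_filter, mul_sum]
  simp only [mul_ite, mul_zero]

lemma headPairSum_gt (ha : a ≠ 0) (hb : b ≠ 0) :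
    headPairSum (fun j l => l < j) n a b X Y d =
      ∑ r ∈ headSplits n b d, ∑ p ∈ antidiagonal r.2,
        (∑ q ∈ headSplits r.1 a p.1, X q.1 q.2) * Y r.1 p.2 := by
  rw [headPairSum, ← sum_antidiagonal_sum_headSplits_snd hb n d
    fun l e₁ e₂ => (∑ q ∈ headSplits l a e₁, X q.1 q.2) * Y l e₂]
  refine sum_congr rfl fun p _ => ?_
  rw [sum_comm]
  refine sum_congr rfl fun r hr => ?_
  rw [← filter_headSplits_lt ha ((mem_headSplits hb).1 hr).1, sum_filter, sum_mul]
  simp only [ite_mul, zero_mul]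

lemma headPairSum_eq (ha : a ≠ 0) (hb : b ≠ 0) (hab : a + b ≠ 0) :
    headPairSum (· = ·) n a b X Y d =
      ∑ s ∈ headSplits n (a + b) d, ∑ p ∈ antidiagonal s.2, X s.1 p.1 * Y s.1 p.2 := by
  simp only [headPairSum, ← sum_filter, sum_sigma']
  symm
  apply sum_nbij'
    (fun ⟨⟨j, _⟩, ⟨e₁, e₂⟩⟩ ↦ ⟨(colExpE m a j + e₁, colExpE m b j + e₂), ⟨(j, e₁), (j, e₂)⟩⟩)
    (fun ⟨_, ⟨⟨j, e₁⟩, ⟨_, e₂⟩⟩⟩ ↦ ⟨(j, e₁ + e₂), (e₁, e₂)⟩) <;>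
    aesop (add simp [(mem_headSplits ha), (mem_headSplits hb), (mem_headSplits hab),
      HasAntidiagonal.mem_antidiagonal, colExpE_add, add_add_add_comm])

lemma mulE_MwEAbove_cons_cons (ha : a ≠ 0) (hb : b ≠ 0) (x y : List (Fin m → E)) :
    mulE m (MwEAbove k m n (a :: x)) (MwEAbove k m n (b :: y)) d =
      headPairSum (· < ·) n a b (MwEAbove k m · x) (MwEAbove k m · y) d +
        headPairSum (fun j l => l < j) n a b (MwEAbove k m · x) (MwEAbove k m · y) d +
        headPairSum (· = ·) n a b (MwEAbove k m · x) (MwEAbove k m · y) d := by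
  simp only [headPairSum, mulE_apply, MwEAbove_cons ha, MwEAbove_cons hb, sum_mul_sum,
    ← sum_add_distrib]
  refine sum_congr rfl fun p _ => sum_congr rfl fun q _ => sum_congr rfl fun r _ => ?_
  rcases lt_trichotomy q.1 r.1 with h | h | h
  · simp [h, h.ne, not_lt_of_gt h]
  · simp [h]
  · simp [h, h.ne', not_lt_of_gt h]

end HeadPairs

section QuasiShuffle

variable {k : Type*} [CommRing k] {C : Type*} (op : C → C → C)

lemma qsh_nil_left (y : List C) : qsh (k := k) op [] y = Finsupp.single y 1 := by
  rw [qsh]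

lemma qsh_nil_right (x : List C) : qsh (k := k) op x [] = Finsupp.single x 1 := by
  cases x <;> rw [qsh]
  simp

lemma sum_qsh_cons_cons {M : Type*} [AddCommMonoid M] [Module k M] (F : List C → M)
    (a b : C) (x y : List C) :
    (qsh (k := k) op (a :: x) (b :: y)).sum (fun z c => c • F z) =
      (qsh (k := k) op x (b :: y)).sum (fun z c => c • F (a :: z)) +
        (qsh (k := k) op (a :: x) y).sum (fun z c => c • F (b :: z)) +
        (qsh (k := k) op x y).sum (fun z c => c • F (op a b :: z)) := by
  have h0 : ∀ z, (0 : k) • F z = 0 := fun z => zero_smul k (F z)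
  have hadd : ∀ z (c₁ c₂ : k), (c₁ + c₂) • F z = c₁ • F z + c₂ • F z :=
    fun z c₁ c₂ => add_smul c₁ c₂ (F z)
  rw [qsh, Finsupp.sum_add_index' h0 hadd, Finsupp.sum_add_index' h0 hadd,
    Finsupp.sum_mapDomain_index h0 hadd, Finsupp.sum_mapDomain_index h0 hadd,
    Finsupp.sum_mapDomain_index h0 hadd]

end QuasiShuffle

section ProductFormula

variable {k : Type*} [CommRing k] {E : Type*} [AddCommMonoid E] {m : ℕ}
  [HasAntidiagonal ((Fin m × ℕ+) →₀ E)]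

lemma sum_smul_MwEAbove_cons_apply {c : Fin m → E} (hc : c ≠ 0) (f : List (Fin m → E) →₀ k)
    (n : ℕ) (d : (Fin m × ℕ+) →₀ E) :
    (f.sum fun z r => r • MwEAbove k m n (c :: z)) d =
      ∑ q ∈ headSplits n c d, (f.sum fun z r => r • MwEAbove k m q.1 z) q.2 := by
  simp only [Finsupp.sum, Finset.sum_apply, Pi.smul_apply, smul_eq_mul, MwEAbove_cons hc,
    mul_sum]
  exact sum_comm

theorem mulE_MwEAbove (hsub : ∀ a b : E, a ≠ 0 → b ≠ 0 → a + b ≠ 0) {w u : List (Fin m → E)}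
    (hw : ∀ c ∈ w, c ≠ 0) (hu : ∀ c ∈ u, c ≠ 0) (n : ℕ) :
    mulE m (MwEAbove k m n w) (MwEAbove k m n u) =
      (qsh (k := k) (· + ·) w u).sum fun z c => c • MwEAbove k m n z := by
  induction w, u using qsh.induct generalizing n with
  | case1 y =>
    simp [qsh_nil_left, mulE_MwEAbove_nil_left]
  | case2 x _ =>
    simp [qsh_nil_right, mulE_MwEAbove_nil_right]
  | case3 a x b y ih₁ ih₂ ih₃ =>
    have ha : a ≠ 0 := hw a List.mem_cons_self
    have hb : b ≠ 0 := hu b List.mem_cons_self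
    have hab : a + b ≠ 0 := fun h =>
      ha (funext fun i => (eq_zero_and_eq_zero_of_add_eq_zero hsub (congrFun h i)).1)
    have hx : ∀ c ∈ x, c ≠ 0 := fun c hc => hw c (List.mem_cons_of_mem a hc)
    have hy : ∀ c ∈ y, c ≠ 0 := fun c hc => hu c (List.mem_cons_of_mem b hc)
    ext d
    rw [mulE_MwEAbove_cons_cons ha hb, headPairSum_lt ha hb, headPairSum_gt ha hb,
      headPairSum_eq ha hb hab, sum_qsh_cons_cons, Pi.add_apply, Pi.add_apply,
      sum_smul_MwEAbove_cons_apply ha, sum_smul_MwEAbove_cons_apply hb,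
      sum_smul_MwEAbove_cons_apply hab]
    simp only [← ih₁ hx hu, ← ih₂ hw hy, ← ih₃ hx hy, mulE_apply, MwEAbove_cons ha,
      MwEAbove_cons hb]

end ProductFormula

/-- the product of two monomial multi-quasisymmetric functions
satisfies the quasi-shuffle recursion
`M_{(w_1,…,w_{n_1})} · M_{(u_1,…,u_{n_2})} = M_{(w_1, (w_2,…,w_{n_1}) * u)}
 + M_{(u_1, w * (u_2,…,u_{n_2}))} + M_{(w_1·u_1, (w_2,…,w_{n_1}) * (u_2,…,u_{n_2}))}`
(with `M` extended linearly). -/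
theorem stmt11 (k : Type*) [CommRing k] {E : Type*} [AddCommMonoid E] (m : ℕ)
    (hfin : ∀ e : E, {p : E × E | p.1 + p.2 = e}.Finite)
    (hsub : ∀ a b : E, a ≠ 0 → b ≠ 0 → a + b ≠ 0)
    (w₁ u₁ : Fin m → E) (ws us : List (Fin m → E))
    (hw : ∀ c ∈ w₁ :: ws, c ≠ 0) (hu : ∀ c ∈ u₁ :: us, c ≠ 0) :
    mulE m (MwE k m (w₁ :: ws)) (MwE k m (u₁ :: us)) =
      ((qsh (k := k) (· + ·) ws (u₁ :: us)).sum fun z cz => cz • MwE k m (w₁ :: z)) +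
        ((qsh (k := k) (· + ·) (w₁ :: ws) us).sum fun z cz => cz • MwE k m (u₁ :: z)) +
        ((qsh (k := k) (· + ·) ws us).sum fun z cz => cz • MwE k m ((w₁ + u₁) :: z)) := by
  let := hasAntidiagonalOfFinite (Finsupp.finite_setOf_add_eq (ι := Fin m × ℕ+) hfin hsub)
  simp only [MwE_eq_MwEAbove_zero]
  rw [mulE_MwEAbove hsub hw hu, sum_qsh_cons_cons]
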